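/- In a minimum counterexample (with respect to number of vertices) to the statement 'every subcubic K_4-minor-free graph has exact square chromatic number at most 4', there is no vertex of degree 2 lying on a cycle of length 3 or 4. -/

import Mathlib

/-! Let `v` be a vertex of degree 2 with neighbours `a`, `b` on a 3- or 4-cycle, so that `a` and
`b` are adjacent or have a common neighbour other than `v`. Deleting `v` keeps the graph
subcubic and `K₄`-minor-free, and it preserves every distance-2 pair of the remaining vertices,
since the path `a v b` can be rerouted. By minimality the exact square of `G - v` is
4-colourable, and this colouring is one of the exact square of `G` away from `v`. In the exact
square of `G`, `v` has at most three neighbours: they lie in `N(a) \ {v, z} ∪ N(b) \ {v}`,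
where `z` is `b` or a common neighbour of `a` and `b` other than `v`; so a colour remains free for `v`. -/

/-- The exact square of a graph `G`: two distinct vertices are adjacent iff
their distance in `G` is exactly `2`. -/
def exactSquare {V : Type*} (G : SimpleGraph V) : SimpleGraph V where
  Adj u v := G.dist u v = 2
  symm := ⟨by intro u v h; rwa [SimpleGraph.dist_comm]⟩
  loopless := ⟨by intro v h; simp [SimpleGraph.dist_self] at h⟩

/-- `G` has `H` as a minor: there is a family of nonempty, pairwise disjoint,
connected branch sets in `G`, one for each vertex of `H`, such that every edge
of `H` is realized by an edge of `G` between the corresponding branch sets. -/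
def HasMinor {V W : Type*} (G : SimpleGraph V) (H : SimpleGraph W) : Prop :=
  ∃ B : W → Set V,
    (∀ w, (B w).Nonempty) ∧
    (∀ w, (G.induce (B w)).Connected) ∧
    (Pairwise fun w w' => Disjoint (B w) (B w')) ∧
    ∀ ⦃w w'⦄, H.Adj w w' → ∃ u ∈ B w, ∃ v ∈ B w', G.Adj u v

/-- Planarity, via Wagner's theorem: a graph is planar iff it has neither a
`K₅` minor nor a `K₃,₃` minor. -/
def IsPlanar {V : Type*} (G : SimpleGraph V) : Prop :=
  ¬ HasMinor G (SimpleGraph.completeGraph (Fin 5)) ∧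
    ¬ HasMinor G (completeBipartiteGraph (Fin 3) (Fin 3))

namespace SimpleGraph

variable {V W X : Type*} {G : SimpleGraph V}

lemma dist_eq_two_iff {u v : V} :
    G.dist u v = 2 ↔ u ≠ v ∧ ¬G.Adj u v ∧ (G.commonNeighbors u v).Nonempty := by
  rw [dist, ENat.toNat_eq_iff two_ne_zero]
  exact edist_eq_two_iff

-- `z` is `b` on a triangle and the vertex opposite `v` on a 4-cycle.
lemma Walk.IsCycle.exists_detour {v : V} {p : G.Walk v v} (hp : p.IsCycle)
    (hlen : p.length = 3 ∨ p.length = 4) :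
    ∃ a b z, a ≠ b ∧ G.Adj v a ∧ G.Adj v b ∧ z ≠ v ∧ G.Adj a z ∧ (z = b ∨ G.Adj z b) := by
  have hnil := hp.not_nil
  refine ⟨p.snd, p.penultimate, p.getVert 2, hp.snd_ne_penultimate, p.adj_snd hnil,
    (p.adj_penultimate hnil).symm, fun h => ?_, p.adj_getVert_succ (by omega), ?_⟩
  · rw [hp.getVert_endpoint_iff (by omega)] at h
    omega
  · rcases hlen with h | h
    · left
      simp [Walk.penultimate, h]
    · right
      simpa [Walk.penultimate, h] using p.adj_getVert_succ (i := 2) (by omega)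

lemma Embedding.ncard_neighborSet_le [Finite V] {G' : SimpleGraph W} (e : G' ↪g G) (w : W) :
    (G'.neighborSet w).ncard ≤ (G.neighborSet (e w)).ncard := by
  rw [← Set.ncard_image_of_injective _ e.injective]
  exact Set.ncard_le_ncard (by rintro _ ⟨u, hu, rfl⟩; exact e.map_adj_iff.mpr hu)

lemma _root_.HasMinor.of_embedding {G' : SimpleGraph W} {K : SimpleGraph X}
    (e : G' ↪g G) (h : HasMinor G' K) : HasMinor G K := by
  obtain ⟨B, hne, hconn, hdisj, hedge⟩ := h
  refine ⟨fun k => e '' B k, fun k => (hne k).image e, fun k => ?_,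
    fun k k' hkk' => (Set.disjoint_image_iff e.injective).mpr (hdisj hkk'), fun k k' hkk' => ?_⟩
  · exact (hconn k).map ⟨fun x => ⟨e x.1, x.1, x.2, rfl⟩, e.map_adj_iff.mpr⟩
      (by rintro ⟨_, x, hx, rfl⟩; exact ⟨⟨x, hx⟩, rfl⟩)
  · obtain ⟨u, hu, x, hx, hux⟩ := hedge hkk'
    exact ⟨e u, ⟨u, hu, rfl⟩, e x, ⟨x, hx, rfl⟩, e.map_adj_iff.mpr hux⟩

lemma exactSquare_comap_le {v : V} {f : W ↪ V} (hf : Set.range f = {v}ᶜ)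
    (hdetour : ∀ x y, G.Adj x v → G.Adj v y → x ≠ y → ¬G.Adj x y →
      ∃ z ≠ v, G.Adj x z ∧ G.Adj z y) :
    (exactSquare G).comap f ≤ exactSquare (G.comap f) := by
  intro i j (hij : G.dist (f i) (f j) = 2)
  obtain ⟨hne, hnadj, x, hix, hjx⟩ := dist_eq_two_iff.mp hij
  obtain ⟨z, hzv, hiz, hzj⟩ : ∃ z ≠ v, G.Adj (f i) z ∧ G.Adj z (f j) := by
    by_cases hxv : x = v
    · subst hxv
      exact hdetour _ _ hix hjx.symm hne hnadj
    · exact ⟨x, hxv, hix, hjx.symm⟩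
  obtain ⟨k, rfl⟩ : z ∈ Set.range f := hf ▸ hzv
  exact dist_eq_two_iff.mpr ⟨fun h => hne (congrArg f h), hnadj, k, hiz, hzj.symm⟩

lemma detour_of_neighborSet_eq_pair {v a b z : V} (hNv : G.neighborSet v = {a, b}) (hzv : z ≠ v)
    (haz : G.Adj a z) (hzb : z = b ∨ G.Adj z b) (x y : V) (hxv : G.Adj x v) (hvy : G.Adj v y)
    (hxy : x ≠ y) (hnadj : ¬G.Adj x y) : ∃ z ≠ v, G.Adj x z ∧ G.Adj z y := by
  have hx : x ∈ ({a, b} : Set V) := hNv ▸ hxv.symm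
  have hy : y ∈ ({a, b} : Set V) := hNv ▸ hvy
  rcases hx with rfl | rfl <;> rcases hy with rfl | rfl
  · exact absurd rfl hxy
  · obtain rfl | hzy := hzb
    · exact absurd haz hnadj
    · exact ⟨z, hzv, haz, hzy⟩
  · obtain rfl | hzx := hzb
    · exact absurd haz.symm hnadj
    · exact ⟨z, hzv, hzx.symm, haz.symm⟩
  · exact absurd rfl hxy

lemma ncard_setOf_dist_eq_two_le_three [Finite V] (hdeg : ∀ x, (G.neighborSet x).ncard ≤ 3)
    {v a b z : V} (hNv : G.neighborSet v = {a, b}) (hzv : z ≠ v) (haz : G.Adj a z)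
    (hzb : z = b ∨ G.Adj z b) :
    {u | G.dist v u = 2}.ncard ≤ 3 := by
  have hva : G.Adj v a := show a ∈ G.neighborSet v from hNv ▸ Set.mem_insert a {b}
  have hvb : G.Adj v b := show b ∈ G.neighborSet v from hNv ▸ Set.mem_insert_of_mem a rfl
  have hsub : {u | G.dist v u = 2} ⊆ (G.neighborSet a \ {v, z}) ∪ (G.neighborSet b \ {v}) := by
    intro u hu
    obtain ⟨hvu, hnadj, x, hvx, hux⟩ := dist_eq_two_iff.mp hu
    have hx : x ∈ ({a, b} : Set V) := hNv ▸ hvx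
    rcases hx with rfl | rfl
    · by_cases huz : u = z
      · subst huz
        rcases hzb with rfl | hub
        · exact absurd hvb hnadj
        · exact Or.inr ⟨hub.symm, hvu.symm⟩
      · exact Or.inl ⟨hux.symm, by simp [hvu.symm, huz]⟩
    · exact Or.inr ⟨hux.symm, hvu.symm⟩
  have ha : (G.neighborSet a \ {v, z}).ncard ≤ 1 := by
    have hpair : ({v, z} : Set V) ⊆ G.neighborSet a := by
      simp [Set.insert_subset_iff, hva.symm, haz]
    rw [Set.ncard_sdiff hpair, Set.ncard_pair hzv.symm]
    have := hdeg a
    omega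
  have hb : (G.neighborSet b \ {v}).ncard ≤ 2 := by
    rw [Set.ncard_sdiff_singleton_of_mem (show v ∈ G.neighborSet b from hvb.symm)]
    have := hdeg b
    omega
  calc {u | G.dist v u = 2}.ncard ≤ _ := Set.ncard_le_ncard hsub
    _ ≤ _ := Set.ncard_union_le _ _
    _ ≤ 3 := by omega

lemma Colorable.of_comap_of_range_eq_compl [Finite V] {v : V} {f : W ↪ V}
    (hf : Set.range f = {v}ᶜ) {k : ℕ} (hG : (G.comap f).Colorable k)
    (hv : (G.neighborSet v).ncard < k) : G.Colorable k := by
  obtain ⟨C⟩ := hG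
  have : Finite W := .of_injective f f.injective
  have hNv : G.neighborSet v ⊆ Set.range f := hf ▸ fun u hu => (G.ne_of_adj hu).symm
  obtain ⟨c₀, -, hc₀⟩ : ∃ c₀, c₀ ∈ Set.univ ∧ c₀ ∉ C '' (f ⁻¹' G.neighborSet v) := by
    refine Set.exists_mem_notMem_of_ncard_lt_ncard ?_
    calc (C '' (f ⁻¹' G.neighborSet v)).ncard ≤ (f ⁻¹' G.neighborSet v).ncard :=
          Set.ncard_image_le
      _ = (G.neighborSet v).ncard := Set.ncard_preimage_of_injective_subset_range f.injective hNv
      _ < k := hv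
      _ = (Set.univ : Set (Fin k)).ncard := by simp
  have hv_range : ¬∃ i, f i = v := fun ⟨i, hi⟩ =>
    (show f i ∈ ({v}ᶜ : Set V) from hf ▸ Set.mem_range_self i) hi
  set g := Function.extend f C fun _ => c₀
  have hg_f : ∀ i, g (f i) = C i := fun i => f.injective.extend_apply _ _ i
  have hg_v : g v = c₀ := Function.extend_apply' _ _ _ hv_range
  have hfree : ∀ j, G.Adj v (f j) → c₀ ≠ C j := fun j hj h => hc₀ ⟨j, hj, h.symm⟩
  have hcases : ∀ x, (∃ i, f i = x) ∨ x = v := fun x => by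
    by_cases hx : x = v
    · exact Or.inr hx
    · exact Or.inl (hf ▸ hx : x ∈ Set.range f)
  refine ⟨Coloring.mk g fun {x y} hxy => ?_⟩
  rcases hcases x with ⟨i, rfl⟩ | rfl <;> rcases hcases y with ⟨j, rfl⟩ | rfl
  · rw [hg_f, hg_f]
    exact C.valid hxy
  · rw [hg_f, hg_v]
    exact (hfree i hxy.symm).symm
  · rw [hg_v, hg_f]
    exact hfree j hxy
  · exact (G.irrefl hxy).elim

end SimpleGraph

open SimpleGraph

/-- In a minimum counterexample (w.r.t. number of vertices) to the statement
"every subcubic `K₄`-minor-free graph has exact square chromatic number at most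
`4`", no vertex of degree `2` lies on a cycle of length `3` or `4`. -/
theorem min_counterexample_no_2vertex_on_short_cycle
    (n : ℕ) (G : SimpleGraph (Fin n))
    (hdeg : ∀ v, (G.neighborSet v).ncard ≤ 3)
    (hK4 : ¬ HasMinor G (SimpleGraph.completeGraph (Fin 4)))
    (hbad : ¬ (exactSquare G).chromaticNumber ≤ 4)
    (hmin : ∀ (m : ℕ) (H : SimpleGraph (Fin m)), m < n →
      (∀ v, (H.neighborSet v).ncard ≤ 3) →
      ¬ HasMinor H (SimpleGraph.completeGraph (Fin 4)) →
      (exactSquare H).chromaticNumber ≤ 4) :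
    ¬ ∃ (v : Fin n) (w : G.Walk v v),
        (G.neighborSet v).ncard = 2 ∧ w.IsCycle ∧ (w.length = 3 ∨ w.length = 4) := by
  rintro ⟨v, w, hv2, hcyc, hlen⟩
  obtain ⟨m, rfl⟩ := Nat.exists_eq_add_one_of_ne_zero v.pos.ne'
  obtain ⟨a, b, z, hab, hva, hvb, hzv, haz, hzb⟩ := hcyc.exists_detour hlen
  have hNv : G.neighborSet v = {a, b} :=
    (Set.eq_of_subset_of_ncard_le (by simp [Set.insert_subset_iff, hva, hvb])
      (by rw [hv2, Set.ncard_pair hab])).symm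
  have hf : Set.range v.succAboveEmb = {v}ᶜ := by simp
  let e := Embedding.comap v.succAboveEmb G
  have hH : (exactSquare (G.comap v.succAboveEmb)).Colorable 4 := by
    rw [← chromaticNumber_le_iff_colorable]
    exact hmin m _ m.lt_succ_self (fun i => (e.ncard_neighborSet_le i).trans (hdeg _))
      (fun h => hK4 (h.of_embedding e))
  have hG : (exactSquare G).Colorable 4 :=
    (hH.mono_left (exactSquare_comap_le hf (detour_of_neighborSet_eq_pair hNv hzv haz hzb))
      ).of_comap_of_range_eq_compl hf
      ((ncard_setOf_dist_eq_two_le_three hdeg hNv hzv haz hzb).trans_lt (by norm_num))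
  exact hbad (by exact_mod_cast chromaticNumber_le_iff_colorable.mpr hG)
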